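/- Let V be a separable Hilbert space. The set of essentially coercive operators 𝒜 ∈ L(V, V') is open in L(V, V'), and if 𝒜 is essentially coercive and 𝒦 ∈ L(V, V') is compact, then 𝒜 + 𝒦 is essentially coercive. -/

import Mathlib

/-! The coercivity constant drops by at most the norm of a perturbation, since
`‖(S - T) u u‖ ≤ ‖S - T‖ ‖u‖²`; hence coercivity survives in a ball, while essential
coercivity survives a compact perturbation `K` by absorbing `-K` into the compact part. -/

/-- An operator `𝒜 : V → V'` is essentially coercive if some compact perturbation of it
is coercive. -/
def EssentiallyCoerciveOp {𝕜 : Type*} [RCLike 𝕜]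
    {V : Type*} [NormedAddCommGroup V] [InnerProductSpace 𝕜 V] [CompleteSpace V]
    (A : V →L[𝕜] StrongDual 𝕜 V) : Prop :=
  ∃ (K : V →L[𝕜] StrongDual 𝕜 V) (α : ℝ), 0 < α ∧ IsCompactOperator K ∧
    ∀ u : V, α * ‖u‖ ^ 2 ≤ ‖(A + K) u u‖

section Coercive

variable {𝕜 E : Type*} [NontriviallyNormedField 𝕜] [SeminormedAddCommGroup E] [NormedSpace 𝕜 E]

theorem ContinuousLinearMap.norm_apply_self_le (T : E →L[𝕜] StrongDual 𝕜 E) (u : E) :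
    ‖T u u‖ ≤ ‖T‖ * ‖u‖ ^ 2 := by
  simpa only [mul_assoc, sq] using T.le_opNorm₂ u u

theorem ContinuousLinearMap.sub_norm_sub_mul_sq_le_of_coercive {T S : E →L[𝕜] StrongDual 𝕜 E} {α : ℝ}
    (hT : ∀ u, α * ‖u‖ ^ 2 ≤ ‖T u u‖) (u : E) :
    (α - ‖S - T‖) * ‖u‖ ^ 2 ≤ ‖S u u‖ := by
  have hST : ‖T u u‖ ≤ ‖S u u‖ + ‖S - T‖ * ‖u‖ ^ 2 :=
    calc ‖T u u‖ = ‖S u u - (S - T) u u‖ := by simp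
      _ ≤ ‖S u u‖ + ‖(S - T) u u‖ := norm_sub_le _ _
      _ ≤ ‖S u u‖ + ‖S - T‖ * ‖u‖ ^ 2 := by gcongr; exact (S - T).norm_apply_self_le u
  linarith [hT u]

end Coercive

section EssentiallyCoercive

variable {𝕜 V : Type*} [RCLike 𝕜] [NormedAddCommGroup V] [InnerProductSpace 𝕜 V] [CompleteSpace V]

theorem isOpen_setOf_essentiallyCoerciveOp :
    IsOpen {A : V →L[𝕜] StrongDual 𝕜 V | EssentiallyCoerciveOp A} := by
  refine Metric.isOpen_iff (α := V →L[𝕜] StrongDual 𝕜 V) |>.mpr ?_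
  rintro A ⟨K, α, hα, hK, hcoer⟩
  refine ⟨α, hα, fun B hB => ⟨K, α - ‖B - A‖, ?_, hK, fun u => ?_⟩⟩
  · linarith [(dist_eq_norm B A).symm.trans_lt hB]
  · convert ContinuousLinearMap.sub_norm_sub_mul_sq_le_of_coercive (S := B + K) hcoer u using 4
    abel

theorem EssentiallyCoerciveOp.add_compact {A K : V →L[𝕜] StrongDual 𝕜 V}
    (hA : EssentiallyCoerciveOp A) (hK : IsCompactOperator K) :
    EssentiallyCoerciveOp (A + K) := by
  obtain ⟨K₀, α, hα, hK₀, hcoer⟩ := hA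
  refine ⟨K₀ - K, α, hα, ?_, ?_⟩
  · rw [FunLike.coe_sub]
    exact hK₀.sub hK
  · rwa [show A + K + (K₀ - K) = A + K₀ by abel]

end EssentiallyCoercive

theorem stmt10_general {𝕜 : Type*} [RCLike 𝕜]
    {V : Type*} [NormedAddCommGroup V] [InnerProductSpace 𝕜 V] [CompleteSpace V] :
    IsOpen {A : V →L[𝕜] StrongDual 𝕜 V | EssentiallyCoerciveOp A} ∧
    ∀ (A K : V →L[𝕜] StrongDual 𝕜 V),
      EssentiallyCoerciveOp A → IsCompactOperator K →
        EssentiallyCoerciveOp (A + K) :=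
  ⟨isOpen_setOf_essentiallyCoerciveOp, fun _ _ hA hK => hA.add_compact hK⟩

/-- the essentially coercive operators form an open subset of
`L(V, V')`, and essential coercivity is stable under compact perturbations. -/
theorem stmt10 {𝕜 : Type*} [RCLike 𝕜]
    {V : Type*} [NormedAddCommGroup V] [InnerProductSpace 𝕜 V] [CompleteSpace V]
    [TopologicalSpace.SeparableSpace V] :
    IsOpen {A : V →L[𝕜] StrongDual 𝕜 V | EssentiallyCoerciveOp A} ∧
    ∀ (A K : V →L[𝕜] StrongDual 𝕜 V),
      EssentiallyCoerciveOp A → IsCompactOperator K →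
        EssentiallyCoerciveOp (A + K) :=
  stmt10_general
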